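/- Let (M, K, β) be a braided Grothendieck–Verdier category, and let φ⁺, φ⁻ : D⁻¹ ≅ D be the natural isomorphisms induced, via Yoneda, by the composites Hom(Y, D⁻¹X) ≅ Hom(X⊗Y, K) → Hom(Y⊗X, K) ≅ Hom(Y, DX), where the middle map is pullback along β^±_{Y,X} (with β⁺_{Y,X} = β_{Y,X} and β⁻_{Y,X} = β_{X,Y}⁻¹). Let θ^± : Id_M ≅ D² be the unique natural isomorphisms such that for all X, Y the map Hom(D²Y⊗X, K) → Hom(Y⊗X, K) of precomposition with θ^±_Y ⊗ id_X equals g⁻¹ : Hom(D²Y⊗X, K) ≅ Hom(X⊗Y, K) followed by pullback along β^±_{Y,X}. Then θ^±_Y = φ^±_{DY} for all Y, and D(φ^±_X) = (φ^∓_{DX})⁻¹ for all X. -/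
import Mathlib


open CategoryTheory Opposite MonoidalCategory

universe v u

/-- A Grothendieck–Verdier category structure on a monoidal category `M`:
a dualizing object `K`, the duality anti-equivalence `D`, and the natural
family of bijections `Hom(X ⊗ Y, K) ≃ Hom(X, D Y)`. -/
structure GVCat (M : Type u) [Category.{v} M] [MonoidalCategory M] where
  K : M
  D : Mᵒᵖ ≌ M
  homEquiv : ∀ X Y : M, (X ⊗ Y ⟶ K) ≃ (X ⟶ D.functor.obj (op Y))
  homEquiv_natX : ∀ {X X' : M} (Y : M) (f : X' ⟶ X) (h : X ⊗ Y ⟶ K),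
    homEquiv X' Y (f ▷ Y ≫ h) = f ≫ homEquiv X Y h
  homEquiv_natY : ∀ (X : M) {Y Y' : M} (g : Y' ⟶ Y) (h : X ⊗ Y ⟶ K),
    homEquiv X Y' (X ◁ g ≫ h) = homEquiv X Y h ≫ D.functor.map g.op

namespace GVCat

variable {M : Type u} [Category.{v} M] [MonoidalCategory M] (G : GVCat M)

/-- The duality functor on objects: `D Y`. -/
abbrev d (Y : M) : M := G.D.functor.obj (op Y)

/-- The inverse duality functor on objects: `D⁻¹ X`. -/
abbrev dinv (X : M) : M := (G.D.inverse.obj X).unop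

/-- The duality functor on morphisms. -/
abbrev dmap {A B : M} (f : A ⟶ B) : G.d B ⟶ G.d A := G.D.functor.map f.op

/-- The inverse duality functor on morphisms. -/
abbrev dinvmap {A B : M} (f : A ⟶ B) : G.dinv B ⟶ G.dinv A := (G.D.inverse.map f).unop

/-- `D² Y`. -/
abbrev dd (Y : M) : M := G.d (G.d Y)

/-- `D²` as a covariant endofunctor of `M`. -/
def ddF : M ⥤ M := G.D.functor.rightOp ⋙ G.D.functor

/-- The second defining natural bijection `Hom(X ⊗ Y, K) ≃ Hom(Y, D⁻¹ X)`. -/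
def homEquiv' (X Y : M) : (X ⊗ Y ⟶ G.K) ≃ (Y ⟶ G.dinv X) :=
  (G.homEquiv X Y).trans
    ((G.D.symm.toAdjunction.homEquiv X (op Y)).symm.trans (opEquiv _ _))

/-- The canonical isomorphism `D⁻¹ (D X) ≅ X`. -/
def dinvD (X : M) : G.dinv (G.d X) ≅ X := (G.D.unitIso.app (op X)).unop

/-- The canonical isomorphism `D (D⁻¹ X) ≅ X`. -/
def dDinv (X : M) : G.d (G.dinv X) ≅ X := G.D.counitIso.app X

/-- The canonical natural bijection `g : Hom(X ⊗ Y, K) ≃ Hom(D²Y ⊗ X, K)`. -/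
def g (X Y : M) : (X ⊗ Y ⟶ G.K) ≃ (G.dd Y ⊗ X ⟶ G.K) :=
  ((G.homEquiv X Y).trans ((Iso.refl X).homCongr (G.dinvD (G.d Y)).symm)).trans
    (G.homEquiv' (G.dd Y) X).symm

end GVCat

namespace GVCat

variable {M : Type u} [Category.{v} M] [MonoidalCategory M] [BraidedCategory M]
  (G : GVCat M)

/-- The characterizing property of `φ⁺ : D⁻¹ ≅ D`: postcomposition with `φ⁺_X` equals
`Hom(Y, D⁻¹X) ≅ Hom(X⊗Y, K) → Hom(Y⊗X, K) ≅ Hom(Y, DX)`, the middle map being pullback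
along `β⁺_{Y,X} = β_{Y,X}`. -/
def PhiPlusChar (φ : ∀ X : M, G.dinv X ≅ G.d X) : Prop :=
  ∀ (X Y : M) (k : Y ⟶ G.dinv X),
    k ≫ (φ X).hom = G.homEquiv Y X ((β_ Y X).hom ≫ (G.homEquiv' X Y).symm k)

/-- The characterizing property of `φ⁻ : D⁻¹ ≅ D`, with pullback along
`β⁻_{Y,X} = β_{X,Y}⁻¹`. -/
def PhiMinusChar (φ : ∀ X : M, G.dinv X ≅ G.d X) : Prop :=
  ∀ (X Y : M) (k : Y ⟶ G.dinv X),
    k ≫ (φ X).hom = G.homEquiv Y X ((β_ X Y).inv ≫ (G.homEquiv' X Y).symm k)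

/-- The characterizing property of `θ⁺ : Id ≅ D²`: precomposition with `θ⁺_Y ⊗ id X`
equals `g⁻¹` followed by pullback along `β⁺_{Y,X} = β_{Y,X}`. -/
def ThetaPlusChar (θ : ∀ Y : M, Y ≅ G.dd Y) : Prop :=
  ∀ (Y X : M) (h : G.dd Y ⊗ X ⟶ G.K),
    ((θ Y).hom ▷ X) ≫ h = (β_ Y X).hom ≫ (G.g X Y).symm h

/-- The characterizing property of `θ⁻ : Id ≅ D²`: precomposition with `θ⁻_Y ⊗ id X`
equals `g⁻¹` followed by pullback along `β⁻_{Y,X} = β_{X,Y}⁻¹`. -/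
def ThetaMinusChar (θ : ∀ Y : M, Y ≅ G.dd Y) : Prop :=
  ∀ (Y X : M) (h : G.dd Y ⊗ X ⟶ G.K),
    ((θ Y).hom ▷ X) ≫ h = (β_ X Y).inv ≫ (G.g X Y).symm h

end GVCat


section Aux

namespace GVCat

variable {M : Type u} [Category.{v} M] [MonoidalCategory M] (G : GVCat M)

lemma homEquiv'_eq (X Y : M) (h : X ⊗ Y ⟶ G.K) :
    G.homEquiv' X Y h = (G.dinvD Y).inv ≫ G.dinvmap (G.homEquiv X Y h) := by
  simp only [homEquiv', dinvD, Equivalence.toAdjunction, opEquiv, Adjunction.homEquiv,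
    Equiv.trans_apply, Equiv.coe_fn_mk, Equiv.symm_apply_apply]
  rfl

lemma homEquiv'_symm_eq (X Y : M) (k : Y ⟶ G.dinv X) :
    (G.homEquiv' X Y).symm k = (G.homEquiv X Y).symm ((G.dDinv X).inv ≫ G.dmap k) := by
  simp only [homEquiv', dDinv, Equivalence.toAdjunction, opEquiv, Adjunction.homEquiv,
    Equiv.symm_trans_apply, Equiv.coe_fn_mk, Equiv.symm_symm, Equiv.coe_fn_symm_mk,
    Equiv.apply_eq_iff_eq]
  rfl

lemma dinvmap_id (X : M) : G.dinvmap (𝟙 X) = 𝟙 (G.dinv X) := by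
  show (G.D.inverse.map (𝟙 X)).unop = 𝟙 (G.dinv X)
  rw [CategoryTheory.Functor.map_id]
  rfl

lemma dmap_id (X : M) : G.dmap (𝟙 X) = 𝟙 (G.d X) := by
  show G.D.functor.map (𝟙 X).op = 𝟙 (G.d X)
  rw [show (𝟙 X).op = 𝟙 (op X) from rfl, CategoryTheory.Functor.map_id]

lemma triangle (Y : M) :
    (G.dDinv (G.d Y)).inv ≫ G.dmap (G.dinvD Y).inv = 𝟙 (G.d Y) := by
  simp only [dDinv, dinvD, dmap, Iso.unop, Quiver.Hom.op_unop]
  exact G.D.counitInv_functor_comp (op Y)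

lemma unit_nat {A X : M} (c : A ⟶ X) :
    G.dinvmap (G.dmap c) ≫ (G.dinvD X).hom = (G.dinvD A).hom ≫ c := by
  have h := congrArg Quiver.Hom.unop (G.D.unit.naturality c.op)
  simp only [unop_comp, Functor.id_map, Functor.comp_map, Quiver.Hom.unop_op] at h
  simp only [dinvD, Iso.unop, dinvmap, dmap]
  exact h.symm

lemma g_symm_apply (X Y : M) (h : G.dd Y ⊗ X ⟶ G.K) :
    (G.g X Y).symm h =
      (G.homEquiv X Y).symm (G.homEquiv' (G.dd Y) X h ≫ (G.dinvD (G.d Y)).hom) := by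
  simp [g, Iso.homCongr]

lemma g_symm_canonical (Y : M) :
    (G.g (G.d Y) Y).symm ((G.homEquiv (G.dd Y) (G.d Y)).symm (𝟙 (G.dd Y))) =
      (G.homEquiv' (G.d Y) Y).symm (G.dinvD Y).inv := by
  rw [g_symm_apply, homEquiv'_eq, Equiv.apply_symm_apply, dinvmap_id,
    homEquiv'_symm_eq, triangle]
  simp

lemma eval_d (X : M) :
    (G.homEquiv' (G.d X) (G.dinv (G.d X))).symm (𝟙 _) =
      G.d X ◁ (G.dinvD X).hom ≫ (G.homEquiv (G.d X) X).symm (𝟙 (G.d X)) := by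
  apply (G.homEquiv' (G.d X) (G.dinv (G.d X))).injective
  rw [Equiv.apply_symm_apply, homEquiv'_eq, G.homEquiv_natY, Equiv.apply_symm_apply,
    Category.id_comp, Iso.eq_inv_comp]
  have h2 := G.unit_nat (G.dinvD X).hom
  rw [← Iso.comp_inv_eq] at h2
  rw [← h2]
  simp

lemma homEquiv_eval (X : M) :
    G.homEquiv X (G.dinv X) ((G.homEquiv' X (G.dinv X)).symm (𝟙 (G.dinv X)))
      = (G.dDinv X).inv := by
  rw [homEquiv'_symm_eq, Equiv.apply_symm_apply, dmap_id, Category.comp_id]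

end GVCat

section Braided

variable {M : Type u} [Category.{v} M] [MonoidalCategory M] [BraidedCategory M]
  (G : GVCat M)

lemma theta_eq_phi (φ : ∀ X : M, G.dinv X ≅ G.d X) (θ : ∀ Y : M, Y ≅ G.dd Y)
    (b : ∀ X Y : M, Y ⊗ X ⟶ X ⊗ Y)
    (hφ : ∀ (X Y : M) (k : Y ⟶ G.dinv X),
      k ≫ (φ X).hom = G.homEquiv Y X (b X Y ≫ (G.homEquiv' X Y).symm k))
    (hθ : ∀ (Y X : M) (h : G.dd Y ⊗ X ⟶ G.K),
      ((θ Y).hom ▷ X) ≫ h = b X Y ≫ (G.g X Y).symm h)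
    (Y : M) : (θ Y).hom = (G.dinvD Y).inv ≫ (φ (G.d Y)).hom := by
  have h₀ : (θ Y).hom =
      G.homEquiv Y (G.d Y)
        ((θ Y).hom ▷ (G.d Y) ≫ (G.homEquiv (G.dd Y) (G.d Y)).symm (𝟙 (G.dd Y))) := by
    rw [G.homEquiv_natX, Equiv.apply_symm_apply, Category.comp_id]
  rw [h₀, hθ, G.g_symm_canonical, ← hφ]

lemma key_plus (φp : ∀ X : M, G.dinv X ≅ G.d X) (hφp : G.PhiPlusChar φp) (X : M) :
    (φp X).hom ▷ X ≫ (G.homEquiv (G.d X) X).symm (𝟙 (G.d X)) =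
      (β_ (G.dinv X) X).hom ≫ (G.homEquiv' X (G.dinv X)).symm (𝟙 (G.dinv X)) := by
  apply (G.homEquiv (G.dinv X) X).injective
  rw [G.homEquiv_natX, Equiv.apply_symm_apply, Category.comp_id, ← hφp X (G.dinv X) (𝟙 _),
    Category.id_comp]

lemma key_minus (φm : ∀ X : M, G.dinv X ≅ G.d X) (hφm : G.PhiMinusChar φm) (X : M) :
    (φm X).hom ▷ X ≫ (G.homEquiv (G.d X) X).symm (𝟙 (G.d X)) =
      (β_ X (G.dinv X)).inv ≫ (G.homEquiv' X (G.dinv X)).symm (𝟙 (G.dinv X)) := by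
  apply (G.homEquiv (G.dinv X) X).injective
  rw [G.homEquiv_natX, Equiv.apply_symm_apply, Category.comp_id, ← hφm X (G.dinv X) (𝟙 _),
    Category.id_comp]

lemma key3 (φp φm : ∀ X : M, G.dinv X ≅ G.d X)
    (hφp : G.PhiPlusChar φp) (hφm : G.PhiMinusChar φm) (X : M) :
    (φm (G.d X)).hom ≫ G.dmap (φp X).hom = (G.dinvD X).hom ≫ (G.dDinv X).inv := by
  have h1 : (φm (G.d X)).hom =
      G.homEquiv (G.dinv (G.d X)) (G.d X)
        ((β_ (G.d X) (G.dinv (G.d X))).inv ≫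
          (G.homEquiv' (G.d X) (G.dinv (G.d X))).symm (𝟙 _)) := by
    have := hφm (G.d X) (G.dinv (G.d X)) (𝟙 _)
    rwa [Category.id_comp] at this
  rw [h1, ← G.homEquiv_natY]
  have inner : G.dinv (G.d X) ◁ (φp X).hom ≫
        ((β_ (G.d X) (G.dinv (G.d X))).inv ≫
          (G.homEquiv' (G.d X) (G.dinv (G.d X))).symm (𝟙 _)) =
      (G.dinvD X).hom ▷ (G.dinv X) ≫
        (G.homEquiv' X (G.dinv X)).symm (𝟙 (G.dinv X)) := by
    rw [G.eval_d X, BraidedCategory.braiding_inv_naturality_right_assoc,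
      ← whisker_exchange_assoc, key_plus G φp hφp X,
      BraidedCategory.braiding_naturality_right_assoc, Iso.inv_hom_id_assoc]
  rw [inner, G.homEquiv_natX, G.homEquiv_eval]

lemma key4 (φp φm : ∀ X : M, G.dinv X ≅ G.d X)
    (hφp : G.PhiPlusChar φp) (hφm : G.PhiMinusChar φm) (X : M) :
    (φp (G.d X)).hom ≫ G.dmap (φm X).hom = (G.dinvD X).hom ≫ (G.dDinv X).inv := by
  have h1 : (φp (G.d X)).hom =
      G.homEquiv (G.dinv (G.d X)) (G.d X)
        ((β_ (G.dinv (G.d X)) (G.d X)).hom ≫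
          (G.homEquiv' (G.d X) (G.dinv (G.d X))).symm (𝟙 _)) := by
    have := hφp (G.d X) (G.dinv (G.d X)) (𝟙 _)
    rwa [Category.id_comp] at this
  rw [h1, ← G.homEquiv_natY]
  have inner : G.dinv (G.d X) ◁ (φm X).hom ≫
        ((β_ (G.dinv (G.d X)) (G.d X)).hom ≫
          (G.homEquiv' (G.d X) (G.dinv (G.d X))).symm (𝟙 _)) =
      (G.dinvD X).hom ▷ (G.dinv X) ≫
        (G.homEquiv' X (G.dinv X)).symm (𝟙 (G.dinv X)) := by
    rw [G.eval_d X, BraidedCategory.braiding_naturality_right_assoc,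
      ← whisker_exchange_assoc, key_minus G φm hφm X,
      BraidedCategory.braiding_inv_naturality_right_assoc, Iso.hom_inv_id_assoc]
  rw [inner, G.homEquiv_natX, G.homEquiv_eval]

end Braided

end Aux

/-- Let `(M, K, β)` be a braided Grothendieck–Verdier category, and let
`φ± : D⁻¹ ≅ D` and `θ± : Id ≅ D²` be the isomorphisms with the stated characterizations.
Then `θ±_Y = φ±_{D Y}` for all `Y` (via the canonical identification `D⁻¹D Y ≅ Y`), and
`D(φ±_X) = (φ∓_{D X})⁻¹` for all `X` (via the canonical identifications
`D D⁻¹ X ≅ X ≅ D⁻¹ D X`). -/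
theorem stmt14 {M : Type u} [Category.{v} M] [MonoidalCategory M] [BraidedCategory M]
    (G : GVCat M)
    (φp φm : ∀ X : M, G.dinv X ≅ G.d X)
    (hφp : G.PhiPlusChar φp) (hφm : G.PhiMinusChar φm)
    (θp θm : ∀ Y : M, Y ≅ G.dd Y)
    (hθp : G.ThetaPlusChar θp) (hθm : G.ThetaMinusChar θm) :
    (∀ Y : M, (θp Y).hom = (G.dinvD Y).inv ≫ (φp (G.d Y)).hom)
    ∧ (∀ Y : M, (θm Y).hom = (G.dinvD Y).inv ≫ (φm (G.d Y)).hom)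
    ∧ (∀ X : M,
        G.dmap (φp X).hom ≫ (G.dDinv X).hom = (φm (G.d X)).inv ≫ (G.dinvD X).hom)
    ∧ (∀ X : M,
        G.dmap (φm X).hom ≫ (G.dDinv X).hom = (φp (G.d X)).inv ≫ (G.dinvD X).hom) := by
  refine ⟨fun Y => ?_, fun Y => ?_, fun X => ?_, fun X => ?_⟩
  · exact theta_eq_phi G φp θp (fun X Y => (β_ Y X).hom) hφp hθp Y
  · exact theta_eq_phi G φm θm (fun X Y => (β_ X Y).inv) hφm hθm Y
  · rw [eq_comm, Iso.inv_comp_eq, ← Category.assoc, key3 G φp φm hφp hφm X]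
    simp
  · rw [eq_comm, Iso.inv_comp_eq, ← Category.assoc, key4 G φp φm hφp hφm X]
    simp
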